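/- arXiv:1804.05270 — 2 statements merged into one kernel-verified Lean document; each statement's English description precedes it below -/
import Mathlib

section
/- Let A be a *-algebra and π_i : A → B(H_i), i = 1,2, two *-representations on Hilbert spaces. If there exist A-equivariant linear isometries V : H_1 → H_2 and W : H_2 → H_1, then π_1 and π_2 are unitarily equivalent, i.e., there is an A-equivariant unitary U : H_1 → H_2. -/
/-!
The argument imitates the Schröder–Bernstein theorem. `T = W ∘ V` is an isometry of `H₁`; let `C`
be the smallest closed `T`-invariant subspace containing `(range W)ᗮ`, the analogue of
`⋃ₙ Tⁿ (H₁ \ W H₂)`. Put `U = V` on `C` and `U = W*` on `Cᗮ`. As `Cᗮ ⊆ range W`, `W*` is isometric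
on `Cᗮ`, and `⟪V c, W* d⟫ = ⟪T c, d⟫ = 0`, so `U` is an isometry. If `z ⊥ range U`, then `W z ∈ C`
(from `z ⊥ W* Cᗮ`), while `W z ⊥ (range W)ᗮ` and `W z ⊥ T C` (from `z ⊥ V C`), which by minimality
of `C` gives `W z ⊥ C`; so `z = 0` and `U` is onto. All subspaces involved are `π₁`-invariant and
the image of `π₁` is closed under adjoints, so the projections onto `C` and `Cᗮ` commute with `π₁`
and `U` is equivariant.
-/

open scoped InnerProductSpace

namespace Submodule

open Module.End

section closedInvtHull

variable {R M : Type*} [Semiring R] [AddCommMonoid M] [Module R M] [TopologicalSpace M]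

def closedInvtHull (T : M →ₗ[R] M) (N : Submodule R M) : Submodule R M :=
  sInf {K | IsClosed (K : Set M) ∧ N ≤ K ∧ K ∈ invtSubmodule T}

variable {T : M →ₗ[R] M} {N : Submodule R M}

theorem closedInvtHull_le {K : Submodule R M} (hK : IsClosed (K : Set M)) (hNK : N ≤ K)
    (hTK : K ∈ invtSubmodule T) : closedInvtHull T N ≤ K :=
  sInf_le ⟨hK, hNK, hTK⟩

theorem isClosed_closedInvtHull : IsClosed (closedInvtHull T N : Set M) := by
  rw [closedInvtHull, coe_sInf]
  exact isClosed_biInter fun K hK => hK.1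

theorem le_closedInvtHull : N ≤ closedInvtHull T N :=
  le_sInf fun _ hK => hK.2.1

theorem closedInvtHull_mem_invtSubmodule : closedInvtHull T N ∈ invtSubmodule T :=
  fun _ hx => mem_sInf.mpr fun K hK => hK.2.2 (mem_sInf.mp hx K hK)

theorem closedInvtHull_mem_invtSubmodule_of_commute {S : M →L[R] M}
    (hST : ∀ x, S (T x) = T (S x)) (hSN : N ∈ invtSubmodule S) :
    closedInvtHull T N ∈ invtSubmodule S := by
  set C := closedInvtHull T N
  have hTC : C ∈ invtSubmodule T := closedInvtHull_mem_invtSubmodule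
  have hC : C ≤ C ⊓ C.comap S.toLinearMap := by
    refine closedInvtHull_le ?_ ?_ ?_
    · exact isClosed_closedInvtHull.inter (isClosed_closedInvtHull.preimage S.continuous)
    · exact le_inf le_closedInvtHull (hSN.trans (comap_mono le_closedInvtHull))
    · rintro x ⟨hx, hSx⟩
      exact ⟨hTC hx, show S (T x) ∈ C from hST x ▸ hTC hSx⟩
  exact hC.trans inf_le_right

end closedInvtHull

theorem mem_orthogonal_closedInvtHull {𝕜 E : Type*} [RCLike 𝕜] [NormedAddCommGroup E]
    [InnerProductSpace 𝕜 E] {T : E →ₗ[𝕜] E} {N : Submodule 𝕜 E} {w : E} (hwN : w ∈ Nᗮ)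
    (hwT : ∀ x ∈ closedInvtHull T N, ⟪T x, w⟫_𝕜 = 0) : w ∈ (closedInvtHull T N)ᗮ := by
  set C := closedInvtHull T N
  have hC : C ≤ C ⊓ (𝕜 ∙ w)ᗮ := by
    refine closedInvtHull_le (isClosed_closedInvtHull.inter (isClosed_orthogonal _)) ?_ ?_
    · exact le_inf le_closedInvtHull fun x hx =>
        mem_orthogonal_singleton_iff_inner_left.mpr (inner_right_of_mem_orthogonal hx hwN)
    · exact fun x hx => ⟨closedInvtHull_mem_invtSubmodule hx.1,
        mem_orthogonal_singleton_iff_inner_left.mpr (hwT x hx.1)⟩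
  exact (mem_orthogonal _ _).mpr fun x hx => mem_orthogonal_singleton_iff_inner_left.mp (hC hx).2

theorem norm_comp_starProjection_add_comp_orthogonal_apply {𝕜 E F : Type*} [RCLike 𝕜]
    [NormedAddCommGroup E] [InnerProductSpace 𝕜 E] [NormedAddCommGroup F] [InnerProductSpace 𝕜 F]
    (K : Submodule 𝕜 E) [K.HasOrthogonalProjection] {f g : E →L[𝕜] F} (hf : ∀ x ∈ K, ‖f x‖ = ‖x‖)
    (hg : ∀ y ∈ Kᗮ, ‖g y‖ = ‖y‖) (hfg : ∀ x ∈ K, ∀ y ∈ Kᗮ, ⟪f x, g y⟫_𝕜 = 0) (x : E) :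
    ‖(f ∘L K.starProjection + g ∘L Kᗮ.starProjection) x‖ = ‖x‖ := by
  have hx : K.starProjection x ∈ K := K.starProjection_apply_mem x
  have hx' : Kᗮ.starProjection x ∈ Kᗮ := Kᗮ.starProjection_apply_mem x
  refine (sq_eq_sq₀ (norm_nonneg _) (norm_nonneg _)).mp ?_
  calc ‖f (K.starProjection x) + g (Kᗮ.starProjection x)‖ ^ 2
      = ‖f (K.starProjection x)‖ ^ 2 + ‖g (Kᗮ.starProjection x)‖ ^ 2 := by
        simpa only [sq] using norm_add_sq_eq_norm_sq_add_norm_sq_of_inner_eq_zero _ _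
          (hfg _ hx _ hx')
    _ = ‖K.starProjection x‖ ^ 2 + ‖Kᗮ.starProjection x‖ ^ 2 := by rw [hf _ hx, hg _ hx']
    _ = ‖x‖ ^ 2 := (K.norm_sq_eq_add_norm_sq_starProjection x).symm

end Submodule

theorem LinearIsometry.surjective_of_forall_inner_eq_zero {𝕜 E F : Type*} [RCLike 𝕜]
    [NormedAddCommGroup E] [InnerProductSpace 𝕜 E] [CompleteSpace E]
    [NormedAddCommGroup F] [InnerProductSpace 𝕜 F] (U : E →ₗᵢ[𝕜] F)
    (hU : ∀ z, (∀ x, ⟪U x, z⟫_𝕜 = 0) → z = 0) : Function.Surjective U := by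
  have hrange : IsComplete (LinearMap.range U.toLinearMap : Set F) := by
    rw [LinearMap.coe_range]
    exact U.isometry.isUniformInducing.isComplete_range
  have := hrange.completeSpace_coe
  have hbot : (LinearMap.range U.toLinearMap)ᗮ = ⊥ := (Submodule.eq_bot_iff _).mpr fun z hz =>
    hU z fun x => Submodule.inner_right_of_mem_orthogonal (LinearMap.mem_range_self _ x) hz
  exact LinearMap.range_eq_top.mp (Submodule.orthogonal_eq_bot_iff.mp hbot)

namespace ContinuousLinearMap

open Module.End

variable {𝕜 A E F G : Type*} [RCLike 𝕜] [Semiring A] [Algebra 𝕜 A] [InvolutiveStar A]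
  [NormedAddCommGroup E] [InnerProductSpace 𝕜 E] [CompleteSpace E]
  [NormedAddCommGroup F] [InnerProductSpace 𝕜 F] [CompleteSpace F]
  [NormedAddCommGroup G] [InnerProductSpace 𝕜 G] [CompleteSpace G]
  {π₁ : A →⋆ₐ[𝕜] (E →L[𝕜] E)} {π₂ : A →⋆ₐ[𝕜] (F →L[𝕜] F)} {π₃ : A →⋆ₐ[𝕜] (G →L[𝕜] G)}

def IsIntertwining (π₁ : A →⋆ₐ[𝕜] (E →L[𝕜] E)) (π₂ : A →⋆ₐ[𝕜] (F →L[𝕜] F))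
    (f : E →L[𝕜] F) : Prop :=
  ∀ a, f ∘L π₁ a = π₂ a ∘L f

theorem adjoint_map_eq_map_star (π : A →⋆ₐ[𝕜] (E →L[𝕜] E)) (a : A) :
    (π a).adjoint = π (star a) := by
  rw [← star_eq_adjoint, map_star]

namespace IsIntertwining

theorem comp {g : F →L[𝕜] G} {f : E →L[𝕜] F} (hg : IsIntertwining π₂ π₃ g)
    (hf : IsIntertwining π₁ π₂ f) : IsIntertwining π₁ π₃ (g ∘L f) := fun a => by
  rw [comp_assoc, hf a, ← comp_assoc, hg a, comp_assoc]

theorem add {f g : E →L[𝕜] F} (hf : IsIntertwining π₁ π₂ f) (hg : IsIntertwining π₁ π₂ g) :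
    IsIntertwining π₁ π₂ (f + g) := fun a => by
  rw [add_comp, hf a, hg a, comp_add]

theorem adjoint {f : E →L[𝕜] F} (hf : IsIntertwining π₁ π₂ f) :
    IsIntertwining π₂ π₁ f.adjoint := fun a => by
  simpa only [adjoint_comp, adjoint_map_eq_map_star, star_star] using
    congrArg ContinuousLinearMap.adjoint (hf (star a)).symm

theorem apply {f : E →L[𝕜] F} (hf : IsIntertwining π₁ π₂ f) (a : A) (x : E) :
    f (π₁ a x) = π₂ a (f x) :=
  DFunLike.congr_fun (hf a) x

theorem range_mem_invtSubmodule {f : E →L[𝕜] F} (hf : IsIntertwining π₁ π₂ f) (a : A) :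
    f.range ∈ invtSubmodule (π₂ a : F →ₗ[𝕜] F) := by
  rintro _ ⟨x, rfl⟩
  exact ⟨π₁ a x, hf.apply a x⟩

end IsIntertwining

theorem orthogonal_mem_invtSubmodule_of_forall {π : A →⋆ₐ[𝕜] (E →L[𝕜] E)} {K : Submodule 𝕜 E}
    (hK : ∀ a, K ∈ invtSubmodule (π a : E →ₗ[𝕜] E)) (a : A) :
    Kᗮ ∈ invtSubmodule (π a : E →ₗ[𝕜] E) :=
  orthogonal_mem_invtSubmodule (by rw [adjoint_map_eq_map_star]; exact hK _)

theorem isIntertwining_starProjection {π : A →⋆ₐ[𝕜] (E →L[𝕜] E)} (K : Submodule 𝕜 E)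
    [K.HasOrthogonalProjection] (hK : ∀ a, K ∈ invtSubmodule (π a : E →ₗ[𝕜] E)) :
    IsIntertwining π π K.starProjection := fun a =>
  ((IsIdempotentElem.commute_iff K.isIdempotentElem_starProjection).mpr
    ⟨by rw [Submodule.range_starProjection]; exact hK a,
      by rw [Submodule.ker_starProjection]; exact orthogonal_mem_invtSubmodule_of_forall hK a⟩).eq

end ContinuousLinearMap

namespace LinearIsometry

open ContinuousLinearMap Submodule Module.End

variable {𝕜 E F : Type*} [RCLike 𝕜]
  [NormedAddCommGroup E] [InnerProductSpace 𝕜 E] [CompleteSpace E]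
  [NormedAddCommGroup F] [InnerProductSpace 𝕜 F] [CompleteSpace F]
  (V : E →ₗᵢ[𝕜] F) (W : F →ₗᵢ[𝕜] E)

def schroederBernsteinSubspace : Submodule 𝕜 E :=
  closedInvtHull (W.comp V).toLinearMap (LinearMap.range W.toLinearMap)ᗮ

instance : (schroederBernsteinSubspace V W).HasOrthogonalProjection := by
  have : CompleteSpace (schroederBernsteinSubspace V W) :=
    isClosed_closedInvtHull.completeSpace_coe
  infer_instance

theorem orthogonal_schroederBernsteinSubspace_le_range :
    (schroederBernsteinSubspace V W)ᗮ ≤ LinearMap.range W.toLinearMap := by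
  have hclosed : IsClosed (LinearMap.range W.toLinearMap : Set E) := by
    rw [LinearMap.coe_range]
    exact W.isometry.isClosedEmbedding.isClosed_range
  calc (schroederBernsteinSubspace V W)ᗮ ≤ (LinearMap.range W.toLinearMap)ᗮᗮ :=
        orthogonal_le le_closedInvtHull
    _ = LinearMap.range W.toLinearMap := by
        rw [orthogonal_orthogonal_eq_closure, hclosed.submodule_topologicalClosure_eq]

theorem adjoint_apply_apply (z : F) : W.toContinuousLinearMap.adjoint (W z) = z :=
  DFunLike.congr_fun W.adjoint_comp_self z

theorem norm_adjoint_apply_of_mem_orthogonal {y : E}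
    (hy : y ∈ (schroederBernsteinSubspace V W)ᗮ) :
    ‖W.toContinuousLinearMap.adjoint y‖ = ‖y‖ := by
  obtain ⟨z, rfl⟩ := orthogonal_schroederBernsteinSubspace_le_range V W hy
  exact (congrArg norm (W.adjoint_apply_apply z)).trans (W.norm_map z).symm

theorem inner_apply_adjoint_apply_eq_zero {x y : E} (hx : x ∈ schroederBernsteinSubspace V W)
    (hy : y ∈ (schroederBernsteinSubspace V W)ᗮ) :
    ⟪V x, W.toContinuousLinearMap.adjoint y⟫_𝕜 = 0 := by
  have hWVx : W (V x) ∈ schroederBernsteinSubspace V W := closedInvtHull_mem_invtSubmodule hx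
  rw [adjoint_inner_right]
  exact inner_right_of_mem_orthogonal hWVx hy

noncomputable def schroederBernsteinIsometry : E →ₗᵢ[𝕜] F where
  toLinearMap := V.toContinuousLinearMap ∘L (schroederBernsteinSubspace V W).starProjection +
    W.toContinuousLinearMap.adjoint ∘L (schroederBernsteinSubspace V W)ᗮ.starProjection
  norm_map' := norm_comp_starProjection_add_comp_orthogonal_apply _ (fun x _ => V.norm_map x)
    (fun _ => norm_adjoint_apply_of_mem_orthogonal V W)
    (fun _ hx _ => inner_apply_adjoint_apply_eq_zero V W hx)

theorem schroederBernsteinIsometry_apply_of_mem {x : E}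
    (hx : x ∈ schroederBernsteinSubspace V W) : schroederBernsteinIsometry V W x = V x := by
  simp [schroederBernsteinIsometry, starProjection_eq_self_iff.mpr hx,
    starProjection_orthogonal_apply_eq_zero hx]

theorem schroederBernsteinIsometry_apply_of_mem_orthogonal {y : E}
    (hy : y ∈ (schroederBernsteinSubspace V W)ᗮ) :
    schroederBernsteinIsometry V W y = W.toContinuousLinearMap.adjoint y := by
  simp [schroederBernsteinIsometry, starProjection_eq_self_iff.mpr hy,
    (starProjection_apply_eq_zero_iff _).mpr hy]

theorem surjective_schroederBernsteinIsometry :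
    Function.Surjective (schroederBernsteinIsometry V W) := by
  refine surjective_of_forall_inner_eq_zero _ fun z hz => ?_
  set C := schroederBernsteinSubspace V W
  have hWz_mem : W z ∈ C := by
    rw [← C.orthogonal_orthogonal]
    refine (mem_orthogonal _ _).mpr fun y hy => ?_
    show ⟪y, W.toContinuousLinearMap z⟫_𝕜 = 0
    rw [← adjoint_inner_left, ← schroederBernsteinIsometry_apply_of_mem_orthogonal V W hy]
    exact hz y
  have hWz_orth : W z ∈ Cᗮ := by
    refine mem_orthogonal_closedInvtHull
      (le_orthogonal_orthogonal _ (LinearMap.mem_range_self _ z)) fun x hx => ?_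
    show ⟪W (V x), W z⟫_𝕜 = 0
    rw [W.inner_map_map, ← schroederBernsteinIsometry_apply_of_mem V W hx]
    exact hz x
  have hWz : W z = 0 := inner_self_eq_zero.mp (inner_right_of_mem_orthogonal hWz_mem hWz_orth)
  exact (map_eq_zero_iff W W.injective).mp hWz

variable {A : Type*} [Semiring A] [Algebra 𝕜 A] [InvolutiveStar A] in
theorem isIntertwining_schroederBernsteinIsometry {π₁ : A →⋆ₐ[𝕜] (E →L[𝕜] E)}
    {π₂ : A →⋆ₐ[𝕜] (F →L[𝕜] F)} (hV : IsIntertwining π₁ π₂ V.toContinuousLinearMap)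
    (hW : IsIntertwining π₂ π₁ W.toContinuousLinearMap) :
    IsIntertwining π₁ π₂ (schroederBernsteinIsometry V W).toContinuousLinearMap := by
  have hC : ∀ a, schroederBernsteinSubspace V W ∈ invtSubmodule (π₁ a : E →ₗ[𝕜] E) :=
    fun a => closedInvtHull_mem_invtSubmodule_of_commute
      (fun x => ((hW.comp hV).apply a x).symm)
      (orthogonal_mem_invtSubmodule_of_forall hW.range_mem_invtSubmodule a)
  exact (hV.comp (isIntertwining_starProjection _ hC)).add <| hW.adjoint.comp <|
    isIntertwining_starProjection _ (orthogonal_mem_invtSubmodule_of_forall hC)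

end LinearIsometry

theorem stmt7_general {A : Type*} [Ring A] [StarRing A] [Algebra ℂ A]
    {H₁ H₂ : Type*} [NormedAddCommGroup H₁] [InnerProductSpace ℂ H₁] [CompleteSpace H₁]
    [NormedAddCommGroup H₂] [InnerProductSpace ℂ H₂] [CompleteSpace H₂]
    (π₁ : A →⋆ₐ[ℂ] (H₁ →L[ℂ] H₁)) (π₂ : A →⋆ₐ[ℂ] (H₂ →L[ℂ] H₂))
    (V : H₁ →ₗᵢ[ℂ] H₂) (hV : ∀ (a : A) (x : H₁), V (π₁ a x) = π₂ a (V x))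
    (W : H₂ →ₗᵢ[ℂ] H₁) (hW : ∀ (a : A) (x : H₂), W (π₂ a x) = π₁ a (W x)) :
    ∃ U : H₁ ≃ₗᵢ[ℂ] H₂, ∀ (a : A) (x : H₁), U (π₁ a x) = π₂ a (U x) := by
  have hV' : ContinuousLinearMap.IsIntertwining π₁ π₂ V.toContinuousLinearMap :=
    fun a => ContinuousLinearMap.ext (hV a)
  have hW' : ContinuousLinearMap.IsIntertwining π₂ π₁ W.toContinuousLinearMap :=
    fun a => ContinuousLinearMap.ext (hW a)
  exact ⟨.ofSurjective _ (V.surjective_schroederBernsteinIsometry W),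
    (V.isIntertwining_schroederBernsteinIsometry W hV' hW').apply⟩

/-- If two *-representations of a *-algebra `A` on Hilbert spaces each admit an
`A`-equivariant linear isometry into the other, then they are unitarily
equivalent via an `A`-equivariant unitary. -/
theorem stmt7 {A : Type*} [Ring A] [StarRing A] [Algebra ℂ A] [StarModule ℂ A]
    {H₁ H₂ : Type*} [NormedAddCommGroup H₁] [InnerProductSpace ℂ H₁] [CompleteSpace H₁]
    [NormedAddCommGroup H₂] [InnerProductSpace ℂ H₂] [CompleteSpace H₂]
    (π₁ : A →⋆ₐ[ℂ] (H₁ →L[ℂ] H₁)) (π₂ : A →⋆ₐ[ℂ] (H₂ →L[ℂ] H₂))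
    (V : H₁ →ₗᵢ[ℂ] H₂) (hV : ∀ (a : A) (x : H₁), V (π₁ a x) = π₂ a (V x))
    (W : H₂ →ₗᵢ[ℂ] H₁) (hW : ∀ (a : A) (x : H₂), W (π₂ a x) = π₁ a (W x)) :
    ∃ U : H₁ ≃ₗᵢ[ℂ] H₂, ∀ (a : A) (x : H₁), U (π₁ a x) = π₂ a (U x) :=
  stmt7_general π₁ π₂ V hV W hW
end

section
/- Let G be a countably infinite group acting on K^G by the left shift (g·x)(t) = x(g⁻¹t), with the Bernoulli measure κ^G for a probability space (K, κ). If f ∈ L²(κ) has mean zero and norm one, and (R_n)_{n∈ℕ} is a sequence of finite subsets of G such that g·R_n ≠ h·R_k whenever (g, n) ≠ (h, k), then the functions ζ_{n,g}(x) = ∏_{r ∈ g·R_n} f(x(r)) form an orthonormal family in L²(κ^G), and ζ_{n,g} = ρ(g)ζ_{n,1} where ρ is the Koopman representation. -/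
/-!
Under the Bernoulli measure the coordinates `x ↦ x r` are independent with law `κ`, so the
integral of a product over a finite set of coordinates is the product of the integrals. For
`S ≠ T`, the integrand `(∏_{r ∈ S} f (x r)) * conj (∏_{r ∈ T} f (x r))` contains, for a point `r`
of `S ∆ T`, the lone factor `f (x r)` or `conj (f (x r))`, whose integral vanishes since `f` has
mean zero. The Koopman identity is the reindexing `r ↦ g * r`.
-/

open MeasureTheory ProbabilityTheory ComplexConjugate
open scoped symmDiff

def IsBernoulliMeasure {ι K : Type*} [MeasurableSpace K] (μ : Measure (ι → K)) (κ : Measure K) :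
    Prop :=
  ∀ (S : Finset ι) (A : ι → Set K), (∀ i, MeasurableSet (A i)) →
    μ {x | ∀ i ∈ S, x i ∈ A i} = ∏ i ∈ S, κ (A i)

namespace IsBernoulliMeasure

variable {ι K : Type*} [MeasurableSpace K] {κ : Measure K} {μ : Measure (ι → K)}
  (hμ : IsBernoulliMeasure μ κ)
include hμ

theorem map_eval (i : ι) : μ.map (fun x => x i) = κ := by
  ext B hB
  rw [Measure.map_apply (measurable_pi_apply i) hB]
  simpa [Set.preimage] using hμ {i} (fun _ => B) (fun _ => hB)

theorem iIndepFun_eval : iIndepFun (fun i (x : ι → K) => x i) μ := by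
  classical
  rw [iIndepFun_iff_measure_inter_preimage_eq_mul]
  intro S B hB
  have hA : ∀ i, MeasurableSet (if i ∈ S then B i else Set.univ) := fun i => by
    split_ifs with hi
    exacts [hB i hi, MeasurableSet.univ]
  calc μ (⋂ i ∈ S, (fun x => x i) ⁻¹' B i)
      = μ {x | ∀ i ∈ S, x i ∈ if i ∈ S then B i else Set.univ} := by
        congr 1; ext x; simp +contextual
    _ = ∏ i ∈ S, κ (if i ∈ S then B i else Set.univ) := hμ S _ hA
    _ = ∏ i ∈ S, μ ((fun x => x i) ⁻¹' B i) := by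
        refine Finset.prod_congr rfl fun i hi => ?_
        rw [if_pos hi, ← Measure.map_apply (measurable_pi_apply i) (hB i hi),
          hμ.map_eval]

theorem integral_finset_prod {𝕜 : Type*} [RCLike 𝕜] (S : Finset ι) (F : ι → K → 𝕜)
    (hF : ∀ i, AEStronglyMeasurable (F i) κ) :
    ∫ x, ∏ i ∈ S, F i (x i) ∂μ = ∏ i ∈ S, ∫ y, F i y ∂κ := by
  have hS := hμ.iIndepFun_eval.precomp (Subtype.val_injective (p := (· ∈ S)))
  have hX : ∀ i, AEMeasurable (fun x : ι → K => x i) μ := fun i =>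
    (measurable_pi_apply i).aemeasurable
  have hmap := hμ.map_eval
  calc ∫ x, ∏ i ∈ S, F i (x i) ∂μ = ∫ x, ∏ i : S, F i (x i) ∂μ :=
        integral_congr_ae (.of_forall fun x => (Finset.prod_coe_sort S _).symm)
    _ = ∏ i : S, ∫ x, F i (x i) ∂μ :=
        hS.integral_fun_prod_comp (fun i => hX i) (fun i => by rw [hmap]; exact hF i)
    _ = ∏ i : S, ∫ y, F i y ∂κ := Fintype.prod_congr _ _ fun i => by
        rw [← integral_map (hX i) (by rw [hmap]; exact hF i), hmap]
    _ = ∏ i ∈ S, ∫ y, F i y ∂κ := Finset.prod_coe_sort S (fun i => ∫ y, F i y ∂κ)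

theorem integral_norm_finset_prod_sq_eq_pow {𝕜 : Type*} [RCLike 𝕜] {f : K → 𝕜}
    (hf : AEStronglyMeasurable f κ) (S : Finset ι) :
    ∫ x, ‖∏ i ∈ S, f (x i)‖ ^ 2 ∂μ = (∫ y, ‖f y‖ ^ 2 ∂κ) ^ S.card := by
  simp_rw [norm_prod, ← Finset.prod_pow]
  rw [hμ.integral_finset_prod S (fun _ y => ‖f y‖ ^ 2) (fun _ => hf.norm.pow 2),
    Finset.prod_const]

theorem integral_finset_prod_mul_conj_eq_zero {𝕜 : Type*} [RCLike 𝕜] {f : K → 𝕜}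
    (hf : AEStronglyMeasurable f κ) (hmean : ∫ y, f y ∂κ = 0) {S T : Finset ι} (hST : S ≠ T) :
    ∫ x, (∏ i ∈ S, f (x i)) * conj (∏ i ∈ T, f (x i)) ∂μ = 0 := by
  classical
  set F : ι → K → 𝕜 := fun i y => (if i ∈ S then f y else 1) * conj (if i ∈ T then f y else 1)
  have hF : ∀ i, AEStronglyMeasurable (F i) κ := by
    have hite : ∀ (p : Prop) [Decidable p], AEStronglyMeasurable (fun y => if p then f y else 1) κ :=
      fun p _ => by split_ifs; exacts [hf, aestronglyMeasurable_const]
    exact fun i => (hite _).mul (RCLike.continuous_conj.comp_aestronglyMeasurable (hite _))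
  have hprod : ∀ x : ι → K,
      (∏ i ∈ S, f (x i)) * conj (∏ i ∈ T, f (x i)) = ∏ i ∈ S ∪ T, F i (x i) := fun x => by
    rw [Finset.prod_mul_distrib, ← map_prod, Finset.prod_ite_mem, Finset.prod_ite_mem,
      Finset.union_inter_cancel_left, Finset.union_inter_cancel_right]
  obtain ⟨r, hr⟩ : (S ∆ T).Nonempty :=
    Finset.nonempty_iff_ne_empty.2 (symmDiff_eq_bot.not.2 hST)
  simp_rw [hprod]
  rw [hμ.integral_finset_prod _ F hF]
  refine Finset.prod_eq_zero (Finset.symmDiff_subset_union hr) ?_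
  rcases Finset.mem_symmDiff.1 hr with ⟨hrS, hrT⟩ | ⟨hrT, hrS⟩
  · simpa [F, hrS, hrT] using hmean
  · simp [F, hrS, hrT, integral_conj, hmean]

end IsBernoulliMeasure

theorem stmt12_general {K : Type*} [MeasurableSpace K] (κ : Measure K)
    {G : Type*} [Group G] [DecidableEq G]
    (μ : Measure (G → K))
    (hμ : ∀ (R : Finset G) (A : G → Set K), (∀ r, MeasurableSet (A r)) →
      μ {x | ∀ r ∈ R, x r ∈ A r} = ∏ r ∈ R, κ (A r))
    (f : K → ℂ) (hf : MemLp f 2 κ)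
    (hmean : ∫ x, f x ∂κ = 0) (hnorm : ∫ x, ‖f x‖ ^ 2 ∂κ = 1)
    (R : ℕ → Finset G)
    (hR : ∀ (g h : G) (n k : ℕ), (g, n) ≠ (h, k) →
      (R n).image (fun r => g * r) ≠ (R k).image (fun r => h * r)) :
    (∀ (g h : G) (n k : ℕ), (g, n) ≠ (h, k) →
      ∫ x, (∏ r ∈ (R n).image (fun r => g * r), f (x r)) *
        (starRingEnd ℂ) (∏ r ∈ (R k).image (fun r => h * r), f (x r)) ∂μ = 0) ∧
    (∀ (g : G) (n : ℕ),
      ∫ x, ‖∏ r ∈ (R n).image (fun r => g * r), f (x r)‖ ^ 2 ∂μ = 1) ∧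
    (∀ (g : G) (n : ℕ),
      (fun x : G → K => ∏ r ∈ (R n).image (fun r => g * r), f (x r)) =
        (fun x : G → K => ∏ r ∈ (R n).image (fun r => (1 : G) * r), f ((fun t => x (g * t)) r))) := by
  have hB : IsBernoulliMeasure μ κ := hμ
  refine ⟨fun g h n k hne => hB.integral_finset_prod_mul_conj_eq_zero hf.1 hmean (hR g h n k hne),
    fun g n => by rw [hB.integral_norm_finset_prod_sq_eq_pow hf.1, hnorm, one_pow],
    fun g n => funext fun x => ?_⟩
  simp only [one_mul, Finset.image_id']
  exact Finset.prod_image fun a _ b _ hab => mul_left_cancel hab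

/-- For a Bernoulli shift `G ↷ (K^G, κ^G)` with `f ∈ L²(κ)` of mean zero and norm
one, and finite sets `R_n ⊆ G` with `g·R_n ≠ h·R_k` whenever `(g,n) ≠ (h,k)`, the
functions `ζ_{n,g}(x) = ∏_{r ∈ g·R_n} f(x r)` form an orthonormal family in
`L²(κ^G)`, and `ζ_{n,g} = ρ(g) ζ_{n,1}` for the Koopman representation
`(ρ(g)F)(x) = F(g⁻¹·x)` of the shift `(g·x)(t) = x(g⁻¹ t)`. -/
theorem stmt12 {K : Type*} [MeasurableSpace K] (κ : Measure K) [IsProbabilityMeasure κ]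
    {G : Type*} [Group G] [Countable G] [Infinite G] [DecidableEq G]
    (μ : Measure (G → K)) [IsProbabilityMeasure μ]
    (hμ : ∀ (R : Finset G) (A : G → Set K), (∀ r, MeasurableSet (A r)) →
      μ {x | ∀ r ∈ R, x r ∈ A r} = ∏ r ∈ R, κ (A r))
    (f : K → ℂ) (hf : MemLp f 2 κ)
    (hmean : ∫ x, f x ∂κ = 0) (hnorm : ∫ x, ‖f x‖ ^ 2 ∂κ = 1)
    (R : ℕ → Finset G)
    (hR : ∀ (g h : G) (n k : ℕ), (g, n) ≠ (h, k) →
      (R n).image (fun r => g * r) ≠ (R k).image (fun r => h * r)) :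
    (∀ (g h : G) (n k : ℕ), (g, n) ≠ (h, k) →
      ∫ x, (∏ r ∈ (R n).image (fun r => g * r), f (x r)) *
        (starRingEnd ℂ) (∏ r ∈ (R k).image (fun r => h * r), f (x r)) ∂μ = 0) ∧
    (∀ (g : G) (n : ℕ),
      ∫ x, ‖∏ r ∈ (R n).image (fun r => g * r), f (x r)‖ ^ 2 ∂μ = 1) ∧
    (∀ (g : G) (n : ℕ),
      (fun x : G → K => ∏ r ∈ (R n).image (fun r => g * r), f (x r)) =
        (fun x : G → K => ∏ r ∈ (R n).image (fun r => (1 : G) * r), f ((fun t => x (g * t)) r))) :=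
  stmt12_general κ μ hμ f hf hmean hnorm R hR
end
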